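/- Let 0 < ε < 1, y₁ = (1,0), y₃ = (0, (1+ε)/2), and C the closed Euclidean disk of radius 1/2. For the diagonal linear maps Λ₁ = diag(1,1), Λ₂ = diag(1, 1/ε), Λ₃ = diag(ε, 1/ε), define d_Λ(y, C) = inf_{x∈C} ‖Λ(y−x)‖₂. Then d_{Λ₁}(y₁,C) > d_{Λ₁}(y₃,C), d_{Λ₂}(y₁,C) = d_{Λ₂}(y₃,C), and d_{Λ₃}(y₁,C) < d_{Λ₃}(y₃,C). -/
import Mathlib


noncomputable def n2 (v : ℝ × ℝ) : ℝ := Real.sqrt (v.1 ^ 2 + v.2 ^ 2)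

noncomputable def diskC : Set (ℝ × ℝ) := {x | n2 x ≤ 1 / 2}

noncomputable def dLam (Λ : ℝ × ℝ → ℝ × ℝ) (y : ℝ × ℝ) : ℝ :=
  sInf ((fun x => n2 (Λ (y - x))) '' diskC)

lemma le_n2 {c : ℝ} {v : ℝ × ℝ} (h0 : 0 ≤ c) (h : c ^ 2 ≤ v.1 ^ 2 + v.2 ^ 2) :
    c ≤ n2 v := by
  unfold n2
  calc c = Real.sqrt (c ^ 2) := (Real.sqrt_sq h0).symm
    _ ≤ _ := Real.sqrt_le_sqrt h

lemma n2_eq {c : ℝ} {v : ℝ × ℝ} (h0 : 0 ≤ c) (h : v.1 ^ 2 + v.2 ^ 2 = c ^ 2) :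
    n2 v = c := by
  unfold n2
  rw [h, Real.sqrt_sq h0]

lemma coord_bounds {x : ℝ × ℝ} (hx : x ∈ diskC) : x.1 ≤ 1 / 2 ∧ x.2 ≤ 1 / 2 := by
  have hn : Real.sqrt (x.1 ^ 2 + x.2 ^ 2) ≤ 1 / 2 := hx
  have h0 : (0:ℝ) ≤ x.1 ^ 2 + x.2 ^ 2 := by positivity
  have hs := Real.sq_sqrt h0
  have hnn := Real.sqrt_nonneg (x.1 ^ 2 + x.2 ^ 2)
  have hq : x.1 ^ 2 + x.2 ^ 2 ≤ 1 / 4 := by nlinarith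
  constructor <;> nlinarith

lemma dLam_eq (Λ : ℝ × ℝ → ℝ × ℝ) (y : ℝ × ℝ) (c : ℝ) (x₀ : ℝ × ℝ)
    (hx₀ : x₀ ∈ diskC) (hval : n2 (Λ (y - x₀)) = c)
    (hlb : ∀ x ∈ diskC, c ≤ n2 (Λ (y - x))) : dLam Λ y = c := by
  unfold dLam
  apply le_antisymm
  · exact csInf_le ⟨c, fun v ⟨x, hx, hv⟩ => hv ▸ hlb x hx⟩ ⟨x₀, hx₀, hval⟩
  · exact le_csInf ⟨_, ⟨x₀, hx₀, rfl⟩⟩ (fun v ⟨x, hx, hv⟩ => hv ▸ hlb x hx)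

lemma mem1 : ((1/2 : ℝ), (0 : ℝ)) ∈ diskC := by
  show n2 _ ≤ 1/2
  rw [n2_eq (by norm_num : (0:ℝ) ≤ 1/2) (by norm_num)]

lemma mem2 : ((0 : ℝ), (1/2 : ℝ)) ∈ diskC := by
  show n2 _ ≤ 1/2
  rw [n2_eq (by norm_num : (0:ℝ) ≤ 1/2) (by norm_num)]

theorem stmt2 (ε : ℝ) (hε0 : 0 < ε) (hε1 : ε < 1) :
    (dLam (fun x => (x.1, x.2)) ((1 : ℝ), (0 : ℝ)) >
      dLam (fun x => (x.1, x.2)) ((0 : ℝ), ((1 + ε) / 2 : ℝ))) ∧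
    (dLam (fun x => (x.1, x.2 / ε)) ((1 : ℝ), (0 : ℝ)) =
      dLam (fun x => (x.1, x.2 / ε)) ((0 : ℝ), ((1 + ε) / 2 : ℝ))) ∧
    (dLam (fun x => (ε * x.1, x.2 / ε)) ((1 : ℝ), (0 : ℝ)) <
      dLam (fun x => (ε * x.1, x.2 / ε)) ((0 : ℝ), ((1 + ε) / 2 : ℝ))) := by
  have hεne : ε ≠ 0 := ne_of_gt hε0
  have e1 : dLam (fun x => (x.1, x.2)) ((1 : ℝ), (0 : ℝ)) = 1/2 := by
    apply dLam_eq _ _ _ _ mem1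
    · exact n2_eq (by norm_num) (by norm_num)
    · intro x hx
      obtain ⟨h1, h2⟩ := coord_bounds hx
      exact le_n2 (by norm_num) (by show (1/2:ℝ)^2 ≤ (1 - x.1)^2 + (0 - x.2)^2; nlinarith)
  have e2 : dLam (fun x => (x.1, x.2)) ((0 : ℝ), ((1 + ε) / 2 : ℝ)) = ε/2 := by
    apply dLam_eq _ _ _ _ mem2
    · exact n2_eq (by positivity) (by show (0 - 0:ℝ)^2 + ((1+ε)/2 - 1/2)^2 = (ε/2)^2; ring)
    · intro x hx
      obtain ⟨h1, h2⟩ := coord_bounds hx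
      exact le_n2 (by positivity)
        (by show (ε/2:ℝ)^2 ≤ (0 - x.1)^2 + ((1+ε)/2 - x.2)^2; nlinarith)
  have e3 : dLam (fun x => (x.1, x.2 / ε)) ((1 : ℝ), (0 : ℝ)) = 1/2 := by
    apply dLam_eq _ _ _ _ mem1
    · exact n2_eq (by norm_num)
        (by show (1 - 1/2:ℝ)^2 + ((0 - 0)/ε)^2 = (1/2)^2; field_simp; norm_num)
    · intro x hx
      obtain ⟨h1, h2⟩ := coord_bounds hx
      have := sq_nonneg ((0 - x.2)/ε)
      exact le_n2 (by norm_num)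
        (by show (1/2:ℝ)^2 ≤ (1 - x.1)^2 + ((0 - x.2)/ε)^2; nlinarith)
  have e4 : dLam (fun x => (x.1, x.2 / ε)) ((0 : ℝ), ((1 + ε) / 2 : ℝ)) = 1/2 := by
    apply dLam_eq _ _ _ _ mem2
    · exact n2_eq (by norm_num)
        (by show (0 - 0:ℝ)^2 + (((1+ε)/2 - 1/2)/ε)^2 = (1/2)^2; field_simp; ring)
    · intro x hx
      obtain ⟨h1, h2⟩ := coord_bounds hx
      have ht : (1/2:ℝ) ≤ ((1+ε)/2 - x.2)/ε := by
        rw [le_div_iff₀ hε0]; linarith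
      exact le_n2 (by norm_num)
        (by show (1/2:ℝ)^2 ≤ (0 - x.1)^2 + (((1+ε)/2 - x.2)/ε)^2; nlinarith)
  have e5 : dLam (fun x => (ε * x.1, x.2 / ε)) ((1 : ℝ), (0 : ℝ)) = ε/2 := by
    apply dLam_eq _ _ _ _ mem1
    · exact n2_eq (by positivity)
        (by show (ε * (1 - 1/2):ℝ)^2 + ((0 - 0)/ε)^2 = (ε/2)^2; field_simp; ring)
    · intro x hx
      obtain ⟨h1, h2⟩ := coord_bounds hx
      have := sq_nonneg ((0 - x.2)/ε)
      have hA : ε/2 ≤ ε * (1 - x.1) := by nlinarith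
      exact le_n2 (by positivity)
        (by show (ε/2:ℝ)^2 ≤ (ε * (1 - x.1))^2 + ((0 - x.2)/ε)^2; nlinarith)
  have e6 : dLam (fun x => (ε * x.1, x.2 / ε)) ((0 : ℝ), ((1 + ε) / 2 : ℝ)) = 1/2 := by
    apply dLam_eq _ _ _ _ mem2
    · exact n2_eq (by norm_num)
        (by show (ε * (0 - 0):ℝ)^2 + (((1+ε)/2 - 1/2)/ε)^2 = (1/2)^2; field_simp; ring)
    · intro x hx
      obtain ⟨h1, h2⟩ := coord_bounds hx
      have ht : (1/2:ℝ) ≤ ((1+ε)/2 - x.2)/ε := by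
        rw [le_div_iff₀ hε0]; linarith
      exact le_n2 (by norm_num)
        (by show (1/2:ℝ)^2 ≤ (ε * (0 - x.1))^2 + (((1+ε)/2 - x.2)/ε)^2; nlinarith)
  refine ⟨?_, ?_, ?_⟩
  · rw [e1, e2]; linarith
  · rw [e3, e4]
  · rw [e5, e6]; linarith
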